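/- arXiv:2508.16319 — 3 statements merged into one kernel-verified Lean document; each statement's English description precedes it below -/
import Mathlib

section
/- Every n-vertex graph admitting a 1-page queue layout has at most 2n − 3 edges (for n ≥ 2). -/
/-- Every `n`-vertex graph (`n ≥ 2`) admitting a 1-page queue layout (a linear
order with no two nesting edges) has at most `2n − 3` edges. -/
theorem stmt_6 {V : Type*} [Fintype V] [LinearOrder V] [DecidableEq V]
    (G : SimpleGraph V) [DecidableRel G.Adj]
    (hn : 2 ≤ Fintype.card V)
    (hqueue : ∀ a b c d : V, a < b → b < c → c < d →
      G.Adj a d → G.Adj b c → False) :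
    G.edgeFinset.card ≤ 2 * Fintype.card V - 3 := by
  classical
  set n := Fintype.card V with hcard
  let e : V ≃o Fin n := (monoEquivOfFin V rfl).symm
  let f : Sym2 V → ℕ := Sym2.lift ⟨fun a b => (e a : ℕ) + (e b : ℕ), by
    intro a b; simp [Nat.add_comm]⟩
  -- key lemma on ordered representatives
  have key : ∀ a d b c : V, a < d → b < c → G.Adj a d → G.Adj b c →
      (e a : ℕ) + (e d : ℕ) = (e b : ℕ) + (e c : ℕ) → a = b ∧ d = c := by
    intro a d b c had hbc hAdj hAdj' hsum
    rcases lt_trichotomy a b with h | h | h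
    · have hea : (e a : ℕ) < e b := by
        exact_mod_cast (e.lt_iff_lt.2 h)
      have hdc : (e c : ℕ) < e d := by omega
      have hcd : c < d := e.lt_iff_lt.1 (by exact_mod_cast hdc)
      exact absurd (hqueue a b c d h hbc hcd hAdj hAdj') (fun x => x)
    · refine ⟨h, ?_⟩
      have : (e d : ℕ) = e c := by
        have : (e a : ℕ) = e b := by exact_mod_cast congrArg (fun x => (e x : ℕ)) h
        omega
      have : e d = e c := Fin.ext this
      exact e.injective this
    · have hea : (e b : ℕ) < e a := by
        exact_mod_cast (e.lt_iff_lt.2 h)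
      have hdc : (e d : ℕ) < e c := by omega
      have hdc' : d < c := e.lt_iff_lt.1 (by exact_mod_cast hdc)
      exact absurd (hqueue b a d c h had hdc' hAdj' hAdj) (fun x => x)
  have hinj : Set.InjOn f (G.edgeFinset : Set (Sym2 V)) := by
    intro s hs t ht hst
    induction s using Sym2.ind with
    | _ a d =>
    induction t using Sym2.ind with
    | _ b c =>
    simp only [Finset.coe_sort_coe, Finset.mem_coe, SimpleGraph.mem_edgeFinset,
      SimpleGraph.mem_edgeSet] at hs ht
    simp only [f, Sym2.lift_mk] at hst
    rcases lt_or_gt_of_ne hs.ne with had | had <;>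
    rcases lt_or_gt_of_ne ht.ne with hbc | hbc
    · obtain ⟨h1, h2⟩ := key a d b c had hbc hs ht hst
      rw [h1, h2]
    · obtain ⟨h1, h2⟩ := key a d c b had hbc hs ht.symm (by omega)
      rw [h1, h2, Sym2.eq_swap]
    · obtain ⟨h1, h2⟩ := key d a b c had hbc hs.symm ht (by omega)
      rw [h1, h2, Sym2.eq_swap]
    · obtain ⟨h1, h2⟩ := key d a c b had hbc hs.symm ht.symm (by omega)
      rw [h1, h2]
  have hsub : G.edgeFinset.image f ⊆ Finset.Icc 1 (2 * n - 3) := by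
    intro m hm
    simp only [Finset.mem_image] at hm
    obtain ⟨s, hs, rfl⟩ := hm
    induction s using Sym2.ind with
    | _ a b =>
    simp only [SimpleGraph.mem_edgeFinset, SimpleGraph.mem_edgeSet] at hs
    have hne : e a ≠ e b := fun h => hs.ne (e.injective h)
    have hne' : (e a : ℕ) ≠ (e b : ℕ) := fun h => hne (Fin.ext h)
    have h1 : (e a : ℕ) < n := (e a).isLt
    have h2 : (e b : ℕ) < n := (e b).isLt
    simp only [f, Sym2.lift_mk, Finset.mem_Icc]
    omega
  calc G.edgeFinset.card = (G.edgeFinset.image f).card :=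
        (Finset.card_image_of_injOn hinj).symm
    _ ≤ (Finset.Icc 1 (2 * n - 3)).card := Finset.card_le_card hsub
    _ ≤ 2 * n - 3 := by rw [Nat.card_Icc]; omega
end

section
/- Every n-vertex graph admitting an ℓ-page stack layout has at most (ℓ+1)·n − 3ℓ edges (for n ≥ 3). -/
lemma coreAux (N : ℕ) : ∀ (S : Finset ℕ) (F : Finset (ℕ × ℕ)),
    S.card ≤ N →
    (∀ p ∈ F, p.1 ∈ S ∧ p.2 ∈ S) →
    (∀ p ∈ F, ∃ x ∈ S, p.1 < x ∧ x < p.2) →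
    (∀ p ∈ F, ∃ x ∈ S, x < p.1 ∨ p.2 < x) →
    (∀ p ∈ F, ∀ q ∈ F, ¬(p.1 < q.1 ∧ q.1 < p.2 ∧ p.2 < q.2)) →
    F.card + 3 ≤ S.card ∨ F = ∅ := by
  induction N with
  | zero =>
    intro S F hSN h1 h2 h3 hnc
    rcases F.eq_empty_or_nonempty with hF | hF
    · exact Or.inr hF
    · obtain ⟨p, hp⟩ := hF
      obtain ⟨b, hbS, _⟩ := h2 p hp
      have := Finset.card_pos.mpr ⟨b, hbS⟩
      omega
  | succ N IH =>
  intro S F hSN h1 h2 h3 hnc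
  rcases F.eq_empty_or_nonempty with hF | hF
  · exact Or.inr hF
  left
  obtain ⟨p, hp, hmin⟩ := F.exists_min_image (fun p => p.2 - p.1) hF
  obtain ⟨b, hbS, hb1, hb2⟩ := h2 p hp
  set F' := F.erase p with hF'
  set S' := S.erase b with hS'
  -- b is not an endpoint of any chord in F'
  have hA : ∀ q ∈ F', q.1 ≠ b ∧ q.2 ≠ b := by
    intro q hq
    have hqF : q ∈ F := Finset.mem_of_mem_erase hq
    have hqp : q ≠ p := Finset.ne_of_mem_erase hq
    have hmq := hmin q hqF
    obtain ⟨z, hzS, hz1, hz2⟩ := h2 q hqF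
    constructor
    · intro h
      subst h
      by_cases hc : q.2 ≤ p.2
      · omega
      · exact hnc p hp q hqF ⟨hb1, hb2, by omega⟩
    · intro h
      subst h
      by_cases hc : p.1 ≤ q.1
      · omega
      · exact hnc q hqF p hp ⟨by omega, hb1, hb2⟩
  have hcard : S'.card = S.card - 1 := Finset.card_erase_of_mem hbS
  have hSpos : 0 < S.card := Finset.card_pos.mpr ⟨b, hbS⟩
  have h1' : ∀ q ∈ F', q.1 ∈ S' ∧ q.2 ∈ S' := by
    intro q hq
    have hqF : q ∈ F := Finset.mem_of_mem_erase hq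
    obtain ⟨hA1, hA2⟩ := hA q hq
    exact ⟨Finset.mem_erase.mpr ⟨hA1, (h1 q hqF).1⟩,
      Finset.mem_erase.mpr ⟨hA2, (h1 q hqF).2⟩⟩
  have h2' : ∀ q ∈ F', ∃ x ∈ S', q.1 < x ∧ x < q.2 := by
    intro q hq
    have hqF : q ∈ F := Finset.mem_of_mem_erase hq
    have hqp : q ≠ p := Finset.ne_of_mem_erase hq
    have hmq := hmin q hqF
    obtain ⟨z, hzS, hz1, hz2⟩ := h2 q hqF
    by_cases hzb : z = b
    · subst hzb
      by_cases hc1 : q.1 < p.1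
      · exact ⟨p.1, Finset.mem_erase.mpr ⟨by omega, (h1 p hp).1⟩, by omega⟩
      · by_cases hc2 : p.2 < q.2
        · exact ⟨p.2, Finset.mem_erase.mpr ⟨by omega, (h1 p hp).2⟩, by omega⟩
        · exfalso
          have : q.1 ≠ p.1 ∨ q.2 ≠ p.2 := by
            by_contra hcon
            push_neg at hcon
            exact hqp (Prod.ext hcon.1 hcon.2)
          omega
    · exact ⟨z, Finset.mem_erase.mpr ⟨hzb, hzS⟩, hz1, hz2⟩
  have h3' : ∀ q ∈ F', ∃ x ∈ S', x < q.1 ∨ q.2 < x := by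
    intro q hq
    have hqF : q ∈ F := Finset.mem_of_mem_erase hq
    obtain ⟨w, hwS, hw⟩ := h3 q hqF
    by_cases hwb : w = b
    · subst hwb
      rcases hw with hw | hw
      · refine ⟨p.1, Finset.mem_erase.mpr ⟨by omega, (h1 p hp).1⟩, by omega⟩
      · refine ⟨p.2, Finset.mem_erase.mpr ⟨by omega, (h1 p hp).2⟩, by omega⟩
    · exact ⟨w, Finset.mem_erase.mpr ⟨hwb, hwS⟩, hw⟩
  have hnc' : ∀ q ∈ F', ∀ r ∈ F', ¬(q.1 < r.1 ∧ r.1 < q.2 ∧ q.2 < r.2) :=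
    fun q hq r hr => hnc q (Finset.mem_of_mem_erase hq) r (Finset.mem_of_mem_erase hr)
  have hlt : S'.card < S.card := by omega
  rcases IH S' F' (by omega) h1' h2' h3' hnc' with hres | hres
  · have : F.card = F'.card + 1 := by
      rw [hF', Finset.card_erase_of_mem hp]
      have : 0 < F.card := Finset.card_pos.mpr hF
      omega
    omega
  · -- F = {p}; show S has at least 4 elements
    have hFp : F.card = 1 := by
      have : F.card = F'.card + 1 := by
        rw [hF', Finset.card_erase_of_mem hp]
        have : 0 < F.card := Finset.card_pos.mpr hF
        omega
      rw [hres] at this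
      simpa using this
    obtain ⟨w, hwS, hw⟩ := h3 p hp
    have hsub : ({p.1, b, p.2, w} : Finset ℕ) ⊆ S := by
      intro x hx
      simp only [Finset.mem_insert, Finset.mem_singleton] at hx
      rcases hx with rfl | rfl | rfl | rfl
      · exact (h1 p hp).1
      · exact hbS
      · exact (h1 p hp).2
      · exact hwS
    have h4 : ({p.1, b, p.2, w} : Finset ℕ).card = 4 := by
      rw [Finset.card_insert_of_notMem (by simp; omega),
        Finset.card_insert_of_notMem (by simp; omega),
        Finset.card_insert_of_notMem (by simp; omega),
        Finset.card_singleton]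
    have := Finset.card_le_card hsub
    omega

lemma core (S : Finset ℕ) (F : Finset (ℕ × ℕ))
    (h1 : ∀ p ∈ F, p.1 ∈ S ∧ p.2 ∈ S)
    (h2 : ∀ p ∈ F, ∃ x ∈ S, p.1 < x ∧ x < p.2)
    (h3 : ∀ p ∈ F, ∃ x ∈ S, x < p.1 ∨ p.2 < x)
    (hnc : ∀ p ∈ F, ∀ q ∈ F, ¬(p.1 < q.1 ∧ q.1 < p.2 ∧ p.2 < q.2)) :
    F.card ≤ S.card - 3 := by
  rcases coreAux S.card S F le_rfl h1 h2 h3 hnc with h | h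
  · omega
  · simp [h]


section helpers
variable {V : Type*} [LinearOrder V]

lemma mk_inf_sup (m : Sym2 V) : s(m.inf, m.sup) = m :=
  Sym2.sortEquiv.symm_apply_apply m

variable {G : SimpleGraph V}

lemma edge_inf_lt_sup {m : Sym2 V} (hm : m ∈ G.edgeSet) : m.inf < m.sup := by
  induction m using Sym2.ind with
  | _ u v =>
    have : u ≠ v := ((G.mem_edgeSet).mp hm).ne
    simpa using inf_lt_sup.mpr this

lemma edge_adj {m : Sym2 V} (hm : m ∈ G.edgeSet) : G.Adj m.inf m.sup := by
  rw [← mk_inf_sup m] at hm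
  exact (G.mem_edgeSet).mp hm

end helpers

/-- Every `n`-vertex graph (`n ≥ 3`) admitting an ℓ-page stack layout has at
most `(ℓ+1)·n − 3ℓ` edges. -/
theorem stmt_7 {V : Type*} [Fintype V] [LinearOrder V] [DecidableEq V]
    (G : SimpleGraph V) [DecidableRel G.Adj] (ℓ : ℕ)
    (hn : 3 ≤ Fintype.card V)
    (σ : Sym2 V → Fin ℓ)
    (hstack : ∀ a b c d : V, a < b → b < c → c < d →
      G.Adj a c → G.Adj b d → σ s(a, c) = σ s(b, d) → False) :
    G.edgeFinset.card ≤ (ℓ + 1) * Fintype.card V - 3 * ℓ := by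
  classical
  set n := Fintype.card V with hnn
  set e : V ≃o Fin n := (monoEquivOfFin V rfl).symm with he
  set pos : V → ℕ := fun v => (e v : ℕ) with hpos
  have hposmono : StrictMono pos := fun a b hab => by
    simpa [hpos] using (e.strictMono hab)
  have hposlt : ∀ a b : V, pos a < pos b ↔ a < b := fun a b =>
    ⟨fun h => hposmono.lt_iff_lt.mp h, fun h => hposmono h⟩
  set S : Finset ℕ := Finset.univ.image pos with hS
  have hScard : S.card = n := by
    rw [hS, Finset.card_image_of_injective _ hposmono.injective, Finset.card_univ]
  set E := G.edgeFinset with hE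
  have hEedge : ∀ m ∈ E, m ∈ G.edgeSet := fun m hm =>
    SimpleGraph.mem_edgeFinset.mp hm
  -- boundary predicates
  set bd1 : Sym2 V → Prop := fun m => ∀ w : V, ¬(m.inf < w ∧ w < m.sup) with hbd1
  set bd2 : Sym2 V → Prop := fun m => ∀ w : V, m.inf ≤ w ∧ w ≤ m.sup with hbd2
  set bd : Sym2 V → Prop := fun m => bd1 m ∨ bd2 m with hbd
  have hsplit : (E.filter bd).card + (E.filter (fun m => ¬ bd m)).card = E.card :=
    Finset.card_filter_add_card_filter_not _
  -- boundary bound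
  have hnonempty : (Finset.univ : Finset V).Nonempty := by
    rw [← Finset.card_pos, Finset.card_univ]; omega
  set t := Finset.univ.max' hnonempty with ht
  have hbd1card : (E.filter bd1).card ≤ n - 1 := by
    have hmaps : ∀ m ∈ E.filter bd1, Sym2.inf m ∈ Finset.univ.erase t := by
      intro m hm
      rw [Finset.mem_filter] at hm
      have hlt := edge_inf_lt_sup (hEedge m hm.1)
      refine Finset.mem_erase.mpr ⟨?_, Finset.mem_univ _⟩
      intro hcon
      have := Finset.le_max' Finset.univ m.sup (Finset.mem_univ _)
      rw [← ht, ← hcon] at this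
      exact absurd (lt_of_lt_of_le hlt this) (lt_irrefl _)
    have hinj : ∀ m ∈ E.filter bd1, ∀ m' ∈ E.filter bd1,
        Sym2.inf m = Sym2.inf m' → m = m' := by
      intro m hm m' hm'
      rw [Finset.mem_filter] at hm hm'
      intro hinf
      have h1 := edge_inf_lt_sup (hEedge m hm.1)
      have h1' := edge_inf_lt_sup (hEedge m' hm'.1)
      have hsup : m.sup = m'.sup := by
        rcases lt_trichotomy m.sup m'.sup with h | h | h
        · exact absurd (show m'.inf < m.sup ∧ m.sup < m'.sup from ⟨by rw [← hinf]; exact h1, h⟩) (hm'.2 m.sup)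
        · exact h
        · exact absurd (show m.inf < m'.sup ∧ m'.sup < m.sup from ⟨by rw [hinf]; exact h1', h⟩) (hm.2 m'.sup)
      rw [← mk_inf_sup m, ← mk_inf_sup m', hinf, hsup]
    calc (E.filter bd1).card ≤ (Finset.univ.erase t).card :=
          Finset.card_le_card_of_injOn _ hmaps hinj
      _ = n - 1 := by rw [Finset.card_erase_of_mem (Finset.mem_univ _), Finset.card_univ]
  have hbd2card : (E.filter bd2).card ≤ 1 := by
    rw [Finset.card_le_one]
    intro m hm m' hm'
    rw [Finset.mem_filter] at hm hm'
    have hinf : m.inf = m'.inf :=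
      le_antisymm (hm.2 m'.inf).1 (hm'.2 m.inf).1
    have hsup : m.sup = m'.sup :=
      le_antisymm (hm'.2 m.sup).2 (hm.2 m'.sup).2
    rw [← mk_inf_sup m, ← mk_inf_sup m', hinf, hsup]
  have hbdcard : (E.filter bd).card ≤ n := by
    have hsub : E.filter bd ⊆ E.filter bd1 ∪ E.filter bd2 := by
      intro m hm
      rw [Finset.mem_filter] at hm
      rcases hm.2 with h | h
      · exact Finset.mem_union_left _ (Finset.mem_filter.mpr ⟨hm.1, h⟩)
      · exact Finset.mem_union_right _ (Finset.mem_filter.mpr ⟨hm.1, h⟩)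
    calc (E.filter bd).card ≤ (E.filter bd1 ∪ E.filter bd2).card := Finset.card_le_card hsub
      _ ≤ (E.filter bd1).card + (E.filter bd2).card := Finset.card_union_le _ _
      _ ≤ (n - 1) + 1 := by omega
      _ = n := by omega
  -- chord bound per page
  set E2 := E.filter (fun m => ¬ bd m) with hE2
  have hfiber : E2.card = ∑ i : Fin ℓ, (E2.filter (fun m => σ m = i)).card := by
    exact Finset.card_eq_sum_card_fiberwise (fun m _ => Finset.mem_univ (σ m))
  have hpage : ∀ i : Fin ℓ, (E2.filter (fun m => σ m = i)).card ≤ n - 3 := by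
    intro i
    set P := E2.filter (fun m => σ m = i) with hP
    have hPE : ∀ m ∈ P, m ∈ G.edgeSet := by
      intro m hm
      exact hEedge m (Finset.mem_filter.mp (Finset.mem_filter.mp hm).1).1
    have hPnb : ∀ m ∈ P, ¬ bd m := by
      intro m hm
      exact (Finset.mem_filter.mp (Finset.mem_filter.mp hm).1).2
    have hPσ : ∀ m ∈ P, σ m = i := fun m hm => (Finset.mem_filter.mp hm).2
    set f : Sym2 V → ℕ × ℕ := fun m => (pos m.inf, pos m.sup) with hf
    set F : Finset (ℕ × ℕ) := P.image f with hF
    have hfinj : ∀ m ∈ P, ∀ m' ∈ P, f m = f m' → m = m' := by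
      intro m _ m' _ hmm
      rw [hf] at hmm
      simp only [Prod.mk.injEq] at hmm
      have h1 := hposmono.injective hmm.1
      have h2 := hposmono.injective hmm.2
      rw [← mk_inf_sup m, ← mk_inf_sup m', h1, h2]
    have hFcard : F.card = P.card := Finset.card_image_of_injOn hfinj
    have hcore := core S F ?_ ?_ ?_ ?_
    · omega
    · -- h1 : endpoints in S
      intro p hp
      rw [hF, Finset.mem_image] at hp
      obtain ⟨m, hm, rfl⟩ := hp
      exact ⟨Finset.mem_image_of_mem pos (Finset.mem_univ _),
        Finset.mem_image_of_mem pos (Finset.mem_univ _)⟩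
    · -- h2 : interior vertex
      intro p hp
      rw [hF, Finset.mem_image] at hp
      obtain ⟨m, hm, rfl⟩ := hp
      have hnb := hPnb m hm
      rw [hbd, not_or] at hnb
      have h1 := hnb.1
      simp only [hbd1] at h1
      push_neg at h1
      obtain ⟨w, hw1, hw2⟩ := h1
      exact ⟨pos w, Finset.mem_image_of_mem pos (Finset.mem_univ _),
        hposmono hw1, hposmono hw2⟩
    · -- h3 : vertex outside
      intro p hp
      rw [hF, Finset.mem_image] at hp
      obtain ⟨m, hm, rfl⟩ := hp
      have hnb := hPnb m hm
      rw [hbd, not_or] at hnb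
      have h2 := hnb.2
      simp only [hbd2] at h2
      push_neg at h2
      obtain ⟨w, hw⟩ := h2
      refine ⟨pos w, Finset.mem_image_of_mem pos (Finset.mem_univ _), ?_⟩
      by_cases hc : m.inf ≤ w
      · exact Or.inr (hposmono (hw hc))
      · exact Or.inl (hposmono (lt_of_not_ge hc))
    · -- noncrossing
      intro p hp q hq hcross
      rw [hF, Finset.mem_image] at hp hq
      obtain ⟨m, hm, rfl⟩ := hp
      obtain ⟨m', hm', rfl⟩ := hq
      rw [hf] at hcross
      simp only at hcross
      obtain ⟨hc1, hc2, hc3⟩ := hcross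
      rw [hposlt] at hc1 hc2 hc3
      refine hstack m.inf m'.inf m.sup m'.sup hc1 hc2 hc3
        (edge_adj (hPE m hm)) (edge_adj (hPE m' hm')) ?_
      rw [mk_inf_sup, mk_inf_sup, hPσ m hm, hPσ m' hm']
  -- put it together
  have hsum : E2.card ≤ ℓ * (n - 3) := by
    rw [hfiber]
    calc ∑ i : Fin ℓ, (E2.filter (fun m => σ m = i)).card
        ≤ ∑ _i : Fin ℓ, (n - 3) := Finset.sum_le_sum (fun i _ => hpage i)
      _ = ℓ * (n - 3) := by simp [Finset.sum_const, Finset.card_univ, mul_comm]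
  obtain ⟨k, hk⟩ : ∃ k, n = k + 3 := ⟨n - 3, by omega⟩
  have hrhs : (ℓ + 1) * n - 3 * ℓ = ℓ * k + k + 3 := by
    rw [hk]
    have : (ℓ + 1) * (k + 3) = (ℓ * k + k + 3) + 3 * ℓ := by ring
    rw [this, Nat.add_sub_cancel]
  have hE2k : E2.card ≤ ℓ * k := by rw [show k = n - 3 by omega]; exact hsum
  rw [hrhs]
  omega
end

section
/- Every n-vertex graph admitting an ℓ-page queue layout has at most 2ℓn − ℓ(2ℓ+1) edges (for n ≥ 2ℓ+1). -/
/-!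
Number the vertices `0, …, n-1` along the order and sort the edges `ij` (`i < j`) by `i + j`.
Two distinct edges with the same sum nest, so each of these classes has at most `ℓ` edges.
The class of sum `t` also has at most `⌊(t+1)/2⌋` edges, since the left endpoint `i < t/2`
determines the edge, and symmetrically at most `⌊(2n-1-t)/2⌋`. Summing `min ℓ ⌊(t+1)/2⌋` over
the `n` lowest and (reflected) the `n-1` highest sums gives
`(ℓn - ℓ²) + (ℓ(n-1) - ℓ²) = 2ℓn - ℓ(2ℓ+1)`.
-/

open Finset

theorem Sym2.mk_inf_sup {α : Type*} [LinearOrder α] (e : Sym2 α) : s(e.inf, e.sup) = e :=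
  Sym2.sortEquiv.symm_apply_apply e

theorem sum_range_min_half_add_mul_self {ℓ N : ℕ} (hN : 2 * ℓ ≤ N) :
    ∑ t ∈ range N, min ℓ ((t + 1) / 2) + ℓ * ℓ = ℓ * N := by
  obtain ⟨m, rfl⟩ := Nat.exists_eq_add_of_le hN
  induction m with
  | zero =>
    have hsq : ∀ k ≤ ℓ, ∑ t ∈ range (2 * k), min ℓ ((t + 1) / 2) = k * k := by
      intro k hk
      induction k with
      | zero => simp
      | succ k ih =>
        rw [show 2 * (k + 1) = 2 * k + 1 + 1 by ring, sum_range_succ, sum_range_succ,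
          ih (by omega)]
        grind
    rw [add_zero, hsq ℓ le_rfl]
    ring
  | succ m ih =>
    rw [← add_assoc, sum_range_succ, add_right_comm, ih (by omega)]
    grind

theorem card_filter_add_eq_le_of_fst_lt {S : Finset (ℕ × ℕ)} (hS : ∀ p ∈ S, p.1 < p.2)
    (t : ℕ) :
    #{p ∈ S | p.1 + p.2 = t} ≤ (t + 1) / 2 := by
  refine (card_le_card_of_injOn Prod.fst (t := range ((t + 1) / 2)) ?_ ?_).trans_eq
    (card_range _)
  · intro p hp
    rw [mem_coe, mem_filter] at hp
    have := hS p hp.1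
    simp only [coe_range, Set.mem_Iio]
    omega
  · intro p hp q hq hpq
    rw [mem_coe, mem_filter] at hp hq
    ext <;> omega

theorem card_filter_add_eq_le_of_snd_lt {S : Finset (ℕ × ℕ)} {n : ℕ}
    (hS : ∀ p ∈ S, p.1 < p.2 ∧ p.2 < n) (t : ℕ) :
    #{p ∈ S | p.1 + p.2 = t} ≤ (2 * n - 2 - t + 1) / 2 := by
  refine (card_le_card_of_injOn Prod.snd (t := Ico (t / 2 + 1) n) ?_ ?_).trans
    (by rw [Nat.card_Ico]; omega)
  · intro p hp
    rw [mem_coe, mem_filter] at hp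
    have := hS p hp.1
    simp only [coe_Ico, Set.mem_Ico]
    omega
  · intro p hp q hq hpq
    rw [mem_coe, mem_filter] at hp hq
    ext <;> omega

theorem card_le_of_card_filter_add_eq_le {S : Finset (ℕ × ℕ)} {n ℓ : ℕ}
    (hS : ∀ p ∈ S, p.1 < p.2 ∧ p.2 < n) (hdiag : ∀ t, #{p ∈ S | p.1 + p.2 = t} ≤ ℓ)
    (hn : 2 * ℓ + 1 ≤ n) :
    #S ≤ 2 * ℓ * n - ℓ * (2 * ℓ + 1) := by
  set F : ℕ → ℕ := fun t ↦ #{p ∈ S | p.1 + p.2 = t}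
  have hF_low (t : ℕ) : F t ≤ min ℓ ((t + 1) / 2) :=
    le_min (hdiag t) (card_filter_add_eq_le_of_fst_lt (fun p hp ↦ (hS p hp).1) t)
  have hF_high (t : ℕ) : F t ≤ min ℓ ((2 * n - 2 - t + 1) / 2) :=
    le_min (hdiag t) (card_filter_add_eq_le_of_snd_lt hS t)
  have hsplit : #S = ∑ t ∈ range n, F t + ∑ t ∈ range (n - 1), F (n + t) := by
    rw [← sum_range_add, card_eq_sum_card_fiberwise (f := fun p ↦ p.1 + p.2)]
    intro p hp
    have := hS p hp
    simp only [coe_range, Set.mem_Iio]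
    omega
  -- reflecting `t ↦ n - 2 - t` turns the right-endpoint bound into the left-endpoint one
  have hhigh :
      ∑ t ∈ range (n - 1), F (n + t) ≤ ∑ t ∈ range (n - 1), min ℓ ((t + 1) / 2) := by
    rw [← sum_range_reflect]
    refine sum_le_sum fun t ht ↦ (hF_high _).trans_eq ?_
    rw [mem_range] at ht
    congr 3
    omega
  have hlow : ∑ t ∈ range n, F t ≤ ∑ t ∈ range n, min ℓ ((t + 1) / 2) :=
    sum_le_sum fun t _ ↦ hF_low t
  have hsum_low := sum_range_min_half_add_mul_self (ℓ := ℓ) (N := n) (by omega)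
  have hsum_high := sum_range_min_half_add_mul_self (ℓ := ℓ) (N := n - 1) (by omega)
  rw [Nat.mul_sub_one] at hsum_high
  rw [hsplit, show 2 * ℓ * n = 2 * (ℓ * n) by ring,
    show ℓ * (2 * ℓ + 1) = 2 * (ℓ * ℓ) + ℓ by ring]
  have : 2 * (ℓ * ℓ) + ℓ ≤ ℓ * n := by nlinarith
  generalize ℓ * n = Y at *
  generalize ℓ * ℓ = X at *
  omega

namespace SimpleGraph

variable {V : Type*} [LinearOrder V] {G : SimpleGraph V}

def IsQueueLayout (G : SimpleGraph V) {ι : Type*} (σ : Sym2 V → ι) : Prop :=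
  ∀ a b c d : V, a < b → b < c → c < d →
    G.Adj a d → G.Adj b c → σ s(a, d) = σ s(b, c) → False

theorem adj_inf_sup {e : Sym2 V} (he : e ∈ G.edgeSet) : G.Adj e.inf e.sup := by
  rwa [← Sym2.mk_inf_sup e, mem_edgeSet] at he

theorem inf_lt_sup {e : Sym2 V} (he : e ∈ G.edgeSet) : e.inf < e.sup :=
  (Sym2.inf_le_sup e).lt_of_ne (G.adj_inf_sup he).ne

theorem IsQueueLayout.eq_of_rank_add_eq {ι : Type*} {σ : Sym2 V → ι} (hσ : G.IsQueueLayout σ)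
    {r : V → ℕ} (hr : StrictMono r) {e f : Sym2 V} (he : e ∈ G.edgeSet) (hf : f ∈ G.edgeSet)
    (hsum : r e.inf + r e.sup = r f.inf + r f.sup) (hpage : σ e = σ f)
    (hle : r e.inf ≤ r f.inf) :
    e = f := by
  obtain hlt | heq := hle.lt_or_eq
  · have hsup : f.sup < e.sup := hr.lt_iff_lt.mp (by omega)
    rw [← Sym2.mk_inf_sup e, ← Sym2.mk_inf_sup f] at hpage
    exact (hσ _ _ _ _ (hr.lt_iff_lt.mp hlt) (G.inf_lt_sup hf) hsup (G.adj_inf_sup he)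
      (G.adj_inf_sup hf) hpage).elim
  · exact Sym2.inf_eq_inf_and_sup_eq_sup.mp ⟨hr.injective heq, hr.injective (by omega)⟩

theorem IsQueueLayout.card_edgeFinset_le [Fintype V] [DecidableRel G.Adj] {ℓ n : ℕ}
    {σ : Sym2 V → Fin ℓ} (hσ : G.IsQueueLayout σ)
    {r : V → ℕ} (hr : StrictMono r) (hrn : ∀ v, r v < n) (hn : 2 * ℓ + 1 ≤ n) :
    #G.edgeFinset ≤ 2 * ℓ * n - ℓ * (2 * ℓ + 1) := by
  set P : Sym2 V → ℕ × ℕ := fun e ↦ (r e.inf, r e.sup)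
  have hP : Function.Injective P := fun e f hef ↦
    Sym2.inf_eq_inf_and_sup_eq_sup.mp ⟨hr.injective congr($hef.1), hr.injective congr($hef.2)⟩
  rw [← card_image_of_injective _ hP]
  refine card_le_of_card_filter_add_eq_le ?_ (fun t ↦ ?_) hn
  · simp only [mem_image, mem_edgeFinset, forall_exists_index, and_imp]
    rintro _ e he rfl
    exact ⟨hr (G.inf_lt_sup he), hrn _⟩
  · rw [filter_image]
    refine card_image_le.trans ((card_le_card_of_injOn σ (t := univ) (by simp) ?_).trans_eq
      (card_fin ℓ))
    intro e he f hf hpage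
    rw [mem_coe, mem_filter, mem_edgeFinset] at he hf
    rcases le_total (r e.inf) (r f.inf) with hle | hle
    · exact hσ.eq_of_rank_add_eq hr he.1 hf.1 (he.2.trans hf.2.symm) hpage hle
    · exact (hσ.eq_of_rank_add_eq hr hf.1 he.1 (hf.2.trans he.2.symm) hpage.symm hle).symm

end SimpleGraph

theorem stmt_8_general {V : Type*} [Fintype V] [LinearOrder V]
    (G : SimpleGraph V) [DecidableRel G.Adj] (ℓ : ℕ)
    (hn : 2 * ℓ + 1 ≤ Fintype.card V)
    (σ : Sym2 V → Fin ℓ)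
    (hqueue : ∀ a b c d : V, a < b → b < c → c < d →
      G.Adj a d → G.Adj b c → σ s(a, d) = σ s(b, c) → False) :
    G.edgeFinset.card ≤ 2 * ℓ * Fintype.card V - ℓ * (2 * ℓ + 1) :=
  SimpleGraph.IsQueueLayout.card_edgeFinset_le (G := G) hqueue
    (Fin.val_strictMono.comp (Fintype.orderIsoFinOfCardEq V rfl).symm.strictMono)
    (fun _ ↦ Fin.isLt _) hn

/-- Every `n`-vertex graph (`n ≥ 2ℓ+1`) admitting an ℓ-page queue layout has
at most `2ℓn − ℓ(2ℓ+1)` edges. -/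
theorem stmt_8 {V : Type*} [Fintype V] [LinearOrder V] [DecidableEq V]
    (G : SimpleGraph V) [DecidableRel G.Adj] (ℓ : ℕ)
    (hn : 2 * ℓ + 1 ≤ Fintype.card V)
    (σ : Sym2 V → Fin ℓ)
    (hqueue : ∀ a b c d : V, a < b → b < c → c < d →
      G.Adj a d → G.Adj b c → σ s(a, d) = σ s(b, c) → False) :
    G.edgeFinset.card ≤ 2 * ℓ * Fintype.card V - ℓ * (2 * ℓ + 1) :=
  stmt_8_general G ℓ hn σ hqueue
end
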